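/- Let F ⪯ A be a face and let M be a ℤ^d-graded R_A-module such that multiplication by ∂^F on M is invertible (M is a module over the localization R_A[(∂^F)^{−1}]) and such that M is I_F^A-torsion (every element of M is annihilated by some power of I_F^A). Then qdeg M is a union of translates of ℂF; more precisely, qdeg M = ⋃_{α ∈ tdeg M} (α + ℂF), i.e., a point β ∈ ℂ^d lies in qdeg M if and only if M_α ≠ 0 for some α ∈ (β + ℂF) ∩ ℤ^d. -/

import Mathlib

/-!
Common setup: `A` is a `d × n` integer matrix, given by its columns `a : Fin n → Lat d`,
with `ℤA = ℤ^d` (`SpansZ`) and `ℕA` pointed (`Pointed`).  Faces, semigroups, graded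
modules, quasidegree sets, the dualizing complex `ω•_{S_A}` and the Ishida complexes
`℧•_F` are formalized below; all cohomology statements are expressed via the
(ℤ^d-)graded components of these complexes.
-/

namespace GKZ

open scoped Classical

noncomputable section

abbrev Lat (d : ℕ) := Fin d → ℤ
abbrev CS (d : ℕ) := Fin d → ℂ
abbrev Laur (d : ℕ) := AddMonoidAlgebra ℂ (Lat d)

/-- Inclusion ℤ^d ⊆ ℂ^d. -/
def toC {d : ℕ} (α : Lat d) : CS d := fun i => (α i : ℂ)
/-- Inclusion ℤ^d ⊆ ℝ^d. -/
def toR {d : ℕ} (α : Lat d) : Fin d → ℝ := fun i => (α i : ℝ)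
/-- The monomial t^α in the Laurent polynomial ring ℂ[ℤ^d]. -/
def mono {d : ℕ} (α : Lat d) : Laur d := AddMonoidAlgebra.single α 1

variable {d n : ℕ}

/-- The affine semigroup ℕA generated by the columns of `A`. -/
def NA (a : Fin n → Lat d) : AddSubmonoid (Lat d) := AddSubmonoid.closure (Set.range a)

/-- ℕA is pointed: ℕA ∩ (−ℕA) = {0}. -/
def Pointed (a : Fin n → Lat d) : Prop := ∀ x ∈ NA a, -x ∈ NA a → x = 0

/-- ℤA = ℤ^d. -/
def SpansZ (a : Fin n → Lat d) : Prop :=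
  AddSubgroup.closure (Set.range a) = (⊤ : AddSubgroup (Lat d))

/-- The real cone ℝ₊F spanned by the columns indexed by `F`. -/
def cone (a : Fin n → Lat d) (F : Set (Fin n)) : Set (Fin d → ℝ) :=
  { x | ∃ c : Fin n → ℝ, (∀ i, 0 ≤ c i) ∧ (∀ i, i ∉ F → c i = 0) ∧ x = ∑ i, c i • toR (a i) }

/-- `F` is a face of `A`: ℝ₊F is a face of the cone ℝ₊A, and `F` consists of all the
columns of `A` lying on that face. -/
def IsFace (a : Fin n → Lat d) (F : Set (Fin n)) : Prop :=
  (∀ x y, x ∈ cone a Set.univ → y ∈ cone a Set.univ →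
      x + y ∈ cone a F → x ∈ cone a F ∧ y ∈ cone a F) ∧
  (∀ i, toR (a i) ∈ cone a F → i ∈ F)

/-- ℕF. -/
def NFace (a : Fin n → Lat d) (F : Set (Fin n)) : AddSubmonoid (Lat d) :=
  AddSubmonoid.closure (a '' F)

/-- ℤF. -/
def ZFace (a : Fin n → Lat d) (F : Set (Fin n)) : AddSubgroup (Lat d) :=
  AddSubgroup.closure (a '' F)

/-- ℂF ⊆ ℂ^d. -/
def CFace (a : Fin n → Lat d) (F : Set (Fin n)) : Submodule ℂ (CS d) :=
  Submodule.span ℂ (toC '' (a '' F))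

/-- d_F, the rank of ℤF. -/
def dimF (a : Fin n → Lat d) (F : Set (Fin n)) : ℕ :=
  Module.finrank ℤ (Submodule.span ℤ (a '' F))

/-- σ_F, the sum of the columns of F. -/
def sigmaF (a : Fin n → Lat d) (F : Set (Fin n)) : Lat d :=
  ∑ i : Fin n, if i ∈ F then a i else 0

/-- ε_A = a_1 + ⋯ + a_n. -/
def epsA (a : Fin n → Lat d) : Lat d := ∑ i : Fin n, a i

/-- ℕA − ℕF ⊆ ℤ^d. -/
def NAmNF (a : Fin n → Lat d) (F : Set (Fin n)) : Set (Lat d) :=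
  {γ | ∃ u ∈ NA a, ∃ v ∈ NFace a F, γ = u - v}

/-- ℕF − ℕA ⊆ ℤ^d. -/
def NFmNA (a : Fin n → Lat d) (F : Set (Fin n)) : Set (Lat d) :=
  {γ | ∃ u ∈ NFace a F, ∃ v ∈ NA a, γ = u - v}

/-- ℕF − ℕH ⊆ ℤ^d. -/
def NFmNH (a : Fin n → Lat d) (F H : Set (Fin n)) : Set (Lat d) :=
  {γ | ∃ u ∈ NFace a F, ∃ v ∈ NFace a H, γ = u - v}

/-- ℕA is normal: ℕA = ℤ^d ∩ ℝ₊A. -/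
def Normal (a : Fin n → Lat d) : Prop :=
  ∀ γ : Lat d, γ ∈ NA a ↔ toR γ ∈ cone a Set.univ

/-- The Zariski closure of a subset of ℂ^d. -/
def zClosure {d : ℕ} (T : Set (CS d)) : Set (CS d) :=
  {x | ∀ p : MvPolynomial (Fin d) ℂ, (∀ y ∈ T, MvPolynomial.eval y p = 0) →
    MvPolynomial.eval x p = 0}

def IsZClosed {d : ℕ} (Z : Set (CS d)) : Prop := zClosure Z ⊆ Z

/-- Irreducibility of a subset of ℂ^d in the Zariski topology. -/
def ZIrred {d : ℕ} (Z : Set (CS d)) : Prop :=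
  Z.Nonempty ∧ ∀ C₁ C₂ : Set (CS d), IsZClosed C₁ → IsZClosed C₂ →
    Z ⊆ C₁ ∪ C₂ → Z ⊆ C₁ ∨ Z ⊆ C₂

/-- Krull (topological) dimension of a subset of ℂ^d with the Zariski topology:
the Krull dimension of the poset of irreducible Zariski-closed subsets contained in it. -/
def zdim {d : ℕ} (Z : Set (CS d)) : WithBot ℕ∞ :=
  Order.krullDim {C : Set (CS d) // C ⊆ Z ∧ IsZClosed C ∧ ZIrred C}

/-- `Z` is an irreducible component of `W`: a maximal irreducible Zariski-closed subset. -/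
def IsIrredComp {d : ℕ} (Z W : Set (CS d)) : Prop :=
  Z ⊆ W ∧ IsZClosed Z ∧ ZIrred Z ∧
    ∀ Z' : Set (CS d), IsZClosed Z' → ZIrred Z' → Z ⊆ Z' → Z' ⊆ W → Z' = Z

/-- The type of faces of `A`. -/
def FaceT (a : Fin n → Lat d) := {G : Set (Fin n) // IsFace a G}

instance (a : Fin n → Lat d) : Finite (FaceT a) := by
  unfold FaceT; infer_instance

noncomputable instance (a : Fin n → Lat d) : Fintype (FaceT a) := Fintype.ofFinite _

/-- Degree set of the localization M[∂^{−G}] of the monomial module with degree set `E`: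
the set E − ℕG. -/
def locE (a : Fin n → Lat d) (E : Set (Lat d)) (G : Set (Fin n)) : Set (Lat d) :=
  {γ | ∃ f ∈ NFace a G, γ + f ∈ E}

/-- Functions supported on a subset, as a ℂ-submodule of the function space. -/
def funSupported {ι : Type*} (S : Set ι) : Submodule ℂ (ι → ℂ) where
  carrier := {c | ∀ i, i ∉ S → c i = 0}
  add_mem' := by
    intro x y hx hy i hi
    simp only [Set.mem_setOf_eq] at hx hy
    simp [Pi.add_apply, hx i hi, hy i hi]
  zero_mem' := by intro i _; rfl
  smul_mem' := by
    intro r x hx i hi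
    simp only [Set.mem_setOf_eq] at hx
    simp [Pi.smul_apply, hx i hi]

/-- The degree-γ part of the term of the Ishida complex ℧•_F(M) (base face `F`, monomial
module with degree set `E`) whose summands are indexed by the faces of absolute dimension
`j` (cohomological degree `j − d_F`): functions on the faces `G ⊇ F` with `d_G = j` and
`γ ∈ E − ℕG`. -/
def ishChain (a : Fin n → Lat d) (E : Set (Lat d)) (F : Set (Fin n)) (j : ℤ) (γ : Lat d) :
    Submodule ℂ (FaceT a → ℂ) :=
  funSupported {G : FaceT a | F ⊆ G.1 ∧ (dimF a G.1 : ℤ) = j ∧ γ ∈ locE a E G.1}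

/-- The differential of the Ishida complex (in each ℤ^d-degree): the component from a face
`G'` into a face `G''` covering it is `ε G' G''` times the natural localization map. -/
def ishDelta (a : Fin n → Lat d) (ε : Set (Fin n) → Set (Fin n) → ℂ) :
    (FaceT a → ℂ) →ₗ[ℂ] (FaceT a → ℂ) where
  toFun c := fun G'' => ∑ G' : FaceT a,
    if G'.1 ⊆ G''.1 ∧ dimF a G''.1 = dimF a G'.1 + 1 then ε G'.1 G''.1 * c G' else 0
  map_add' x y := by
    funext G''
    simp only [Pi.add_apply, ← Finset.sum_add_distrib]
    refine Finset.sum_congr rfl fun G' _ => ?_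
    by_cases h : G'.1 ⊆ G''.1 ∧ dimF a G''.1 = dimF a G'.1 + 1
    · simp [h, mul_add]
    · simp [h]
  map_smul' r x := by
    funext G''
    simp only [Pi.smul_apply, smul_eq_mul, RingHom.id_apply, Finset.mul_sum]
    refine Finset.sum_congr rfl fun G' _ => ?_
    by_cases h : G'.1 ⊆ G''.1 ∧ dimF a G''.1 = dimF a G'.1 + 1
    · simp only [h, and_self, if_true]; ring
    · simp [h]

/-- Degree-γ cocycles of the Ishida complex at absolute dimension `j`. -/
def ishZ (a : Fin n → Lat d) (E : Set (Lat d)) (ε : Set (Fin n) → Set (Fin n) → ℂ)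
    (F : Set (Fin n)) (j : ℤ) (γ : Lat d) : Submodule ℂ (FaceT a → ℂ) :=
  ishChain a E F j γ ⊓ LinearMap.ker (ishDelta a ε)

/-- Degree-γ coboundaries of the Ishida complex at absolute dimension `j`. -/
def ishB (a : Fin n → Lat d) (E : Set (Lat d)) (ε : Set (Fin n) → Set (Fin n) → ℂ)
    (F : Set (Fin n)) (j : ℤ) (γ : Lat d) : Submodule ℂ (FaceT a → ℂ) :=
  Submodule.map (ishDelta a ε) (ishChain a E F (j - 1) γ)

/-- The degree-γ component of the cohomology of the Ishida complex ℧•_F(M) at absolute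
dimension `j` (cohomological degree `j − d_F`). -/
abbrev ishH (a : Fin n → Lat d) (E : Set (Lat d)) (ε : Set (Fin n) → Set (Fin n) → ℂ)
    (F : Set (Fin n)) (j : ℤ) (γ : Lat d) :=
  ↥(ishZ a E ε F j γ) ⧸
    Submodule.comap (ishZ a E ε F j γ).subtype (ishB a E ε F j γ)

/-- Nonvanishing of the degree-γ component of the cohomology of the Ishida complex. -/
def ishHne (a : Fin n → Lat d) (E : Set (Lat d)) (ε : Set (Fin n) → Set (Fin n) → ℂ)
    (F : Set (Fin n)) (j : ℤ) (γ : Lat d) : Prop :=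
  ¬ (ishZ a E ε F j γ ≤ ishB a E ε F j γ)

/-- Degree-γ part of the term of ω•_{S_A} in cohomological degree `i`:
functions on the faces `G` with `d_{A/G} = i` and `γ ∈ ℕG − ℕA`. -/
def omChain (a : Fin n → Lat d) (i : ℤ) (γ : Lat d) : Submodule ℂ (FaceT a → ℂ) :=
  funSupported {G : FaceT a | (dimF a G.1 : ℤ) = (d : ℤ) - i ∧ γ ∈ NFmNA a G.1}

/-- Degree-γ part of the differential of ω•_{S_A}: the component from a face `G'` to a face
`G''` covered by it is `ε G' G''` times the natural projection ℂ{ℕG'−ℕA} → ℂ{ℕG''−ℕA}. -/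
def omDelta (a : Fin n → Lat d) (ε : Set (Fin n) → Set (Fin n) → ℂ) (γ : Lat d) :
    (FaceT a → ℂ) →ₗ[ℂ] (FaceT a → ℂ) where
  toFun c := fun G'' =>
    if γ ∈ NFmNA a G''.1 then
      ∑ G' : FaceT a,
        if G''.1 ⊆ G'.1 ∧ dimF a G'.1 = dimF a G''.1 + 1 then ε G'.1 G''.1 * c G' else 0
    else 0
  map_add' x y := by
    funext G''
    by_cases hγ : γ ∈ NFmNA a G''.1
    · simp only [Pi.add_apply, hγ, if_true, ← Finset.sum_add_distrib]
      refine Finset.sum_congr rfl fun G' _ => ?_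
      by_cases h : G''.1 ⊆ G'.1 ∧ dimF a G'.1 = dimF a G''.1 + 1
      · simp [h, mul_add]
      · simp [h]
    · simp [hγ]
  map_smul' r x := by
    funext G''
    by_cases hγ : γ ∈ NFmNA a G''.1
    · simp only [Pi.smul_apply, smul_eq_mul, RingHom.id_apply, hγ, if_true, Finset.mul_sum]
      refine Finset.sum_congr rfl fun G' _ => ?_
      by_cases h : G''.1 ⊆ G'.1 ∧ dimF a G'.1 = dimF a G''.1 + 1
      · simp only [h, and_self, if_true]; ring
      · simp [h]
    · simp [hγ]

/-- Degree-γ cocycles of ω•_{S_A} in cohomological degree `i`. -/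
def omZ (a : Fin n → Lat d) (ε : Set (Fin n) → Set (Fin n) → ℂ) (i : ℤ) (γ : Lat d) :
    Submodule ℂ (FaceT a → ℂ) :=
  omChain a i γ ⊓ LinearMap.ker (omDelta a ε γ)

/-- Degree-γ coboundaries of ω•_{S_A} in cohomological degree `i`. -/
def omB (a : Fin n → Lat d) (ε : Set (Fin n) → Set (Fin n) → ℂ) (i : ℤ) (γ : Lat d) :
    Submodule ℂ (FaceT a → ℂ) :=
  Submodule.map (omDelta a ε γ) (omChain a (i - 1) γ)

/-- Nonvanishing of H^i(ω•_{S_A})_γ. -/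
def omHne (a : Fin n → Lat d) (ε : Set (Fin n) → Set (Fin n) → ℂ) (i : ℤ) (γ : Lat d) : Prop :=
  ¬ (omZ a ε i γ ≤ omB a ε i γ)

/-- A ℤ^d-graded S_A-module, presented by its grading together with the (degree-shifting)
action of the monomials t^u, u ∈ ℕA. -/
structure GradedSAMod (a : Fin n → Lat d) (M : Type) [AddCommGroup M] [Module ℂ M] where
  decomp : Lat d → Submodule ℂ M
  internal : DirectSum.IsInternal decomp
  act : (u : Lat d) → u ∈ NA a → (M →ₗ[ℂ] M)
  act_zero : ∀ h0 : (0 : Lat d) ∈ NA a, act 0 h0 = LinearMap.id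
  act_add : ∀ (u : Lat d) (hu : u ∈ NA a) (v : Lat d) (hv : v ∈ NA a) (huv : u + v ∈ NA a),
    act (u + v) huv = (act u hu).comp (act v hv)
  act_grade : ∀ (u : Lat d) (hu : u ∈ NA a) (γ : Lat d), ∀ m ∈ decomp γ,
    act u hu m ∈ decomp (γ + u)

/-- Finite generation over S_A. -/
def GradedSAMod.FGmod {a : Fin n → Lat d} {M : Type} [AddCommGroup M] [Module ℂ M]
    (g : GradedSAMod a M) : Prop :=
  ∃ S : Finset M, ∀ m : M,
    m ∈ Submodule.span ℂ {x | ∃ u, ∃ hu : u ∈ NA a, ∃ s ∈ S, x = g.act u hu s}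

/-- Degrees of nonzero homogeneous elements of `M` that survive in the localization
`M[∂^{−H}]` (i.e. are killed by no power of t^{σ_H}). -/
def GradedSAMod.survTdeg {a : Fin n → Lat d} {M : Type} [AddCommGroup M] [Module ℂ M]
    (g : GradedSAMod a M) (H : Set (Fin n)) : Set (Lat d) :=
  {γ | ∃ m ∈ g.decomp γ, m ≠ 0 ∧ ∀ (k : ℕ) (hk : k • sigmaF a H ∈ NA a), g.act _ hk m ≠ 0}

/-- The quasidegree set of the localization `M[∂^{−H}]` of a finitely generated graded
module `M`: the union over `k` of the Zariski closures of the true degree sets of the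
finitely generated graded submodules t^{−kσ_H}·M of the localization. -/
def GradedSAMod.qdegLoc {a : Fin n → Lat d} {M : Type} [AddCommGroup M] [Module ℂ M]
    (g : GradedSAMod a M) (H : Set (Fin n)) : Set (CS d) :=
  ⋃ k : ℕ, zClosure (toC '' {γ : Lat d | γ + k • sigmaF a H ∈ g.survTdeg H})

/-- A ℂ-submodule is graded: it is spanned by its homogeneous elements. -/
def IsGradedSubC {d : ℕ} {M : Type} [AddCommGroup M] [Module ℂ M]
    (decomp : Lat d → Submodule ℂ M) (N : Submodule ℂ M) : Prop :=
  N = Submodule.span ℂ ((N : Set M) ∩ ⋃ γ : Lat d, (decomp γ : Set M))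

/-- A ℂ-submodule is an S_A-submodule: stable under the monomial action. -/
def IsStableSub {a : Fin n → Lat d} {M : Type} [AddCommGroup M] [Module ℂ M]
    (g : GradedSAMod a M) (N : Submodule ℂ M) : Prop :=
  ∀ (u : Lat d) (hu : u ∈ NA a), ∀ m ∈ N, g.act u hu m ∈ N

/-- The semigroup ring S_A = ℂ[ℕA] as a subalgebra of ℂ[ℤ^d]. -/
def SAlg (a : Fin n → Lat d) : Subalgebra ℂ (Laur d) :=
  Algebra.adjoin ℂ {x | ∃ α ∈ NA a, x = mono α}

/-- The monomial t^u, u ∈ ℕA, as an element of S_A. -/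
def smono (a : Fin n → Lat d) (u : Lat d) (hu : u ∈ NA a) : ↥(SAlg a) :=
  ⟨mono u, Algebra.subset_adjoin ⟨u, hu, rfl⟩⟩

/-- The underlying ℂ-vector space of the monomial module ℂ{E}: finitely supported
functions on `E`. -/
abbrev wMod (d : ℕ) (E : Set (Lat d)) := ↥(Finsupp.supported ℂ ℂ E)

/-- The action of the monomial t^w on ℂ{E}: shift the degree by `w`, truncate back to `E`. -/
def wAct {d : ℕ} (E : Set (Lat d)) (w : Lat d) : wMod d E →ₗ[ℂ] wMod d E :=
  (Finsupp.restrictDom ℂ ℂ E).comp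
    ((Finsupp.lmapDomain ℂ ℂ (fun γ => γ + w)).comp (Finsupp.supported ℂ ℂ E).subtype)

/-- The elements annihilated by some power of the ideal generated by the t^{a_i}, i ∉ F. -/
def torsionAt (a : Fin n → Lat d) (F : Set (Fin n)) {ML : Type} [AddCommGroup ML]
    [Module ℂ ML] (TL : (u : Lat d) → u ∈ NA a → (ML →ₗ[ℂ] ML)) : Set ML :=
  {y | ∃ k : ℕ, ∀ f : Fin k → Fin n, (∀ j, f j ∉ F) →
    ∀ h : (∑ j, a (f j)) ∈ NA a, TL (∑ j, a (f j)) h y = 0}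

/-- The toric ideal I_A ⊆ R_A = ℂ[∂_1,…,∂_n]. -/
def toricIdeal (a : Fin n → Lat d) : Ideal (MvPolynomial (Fin n) ℂ) :=
  RingHom.ker (MvPolynomial.aeval (fun i => mono (a i)) : MvPolynomial (Fin n) ℂ →ₐ[ℂ] Laur d)

/-- The ideal I_F^A = I_A + ⟨∂_i : a_i ∉ F⟩ of R_A. -/
def IFA (a : Fin n → Lat d) (F : Set (Fin n)) : Ideal (MvPolynomial (Fin n) ℂ) :=
  toricIdeal a ⊔ Ideal.span {p | ∃ i, i ∉ F ∧ p = MvPolynomial.X i}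

/-- An R_A-submodule is graded: it is spanned by its homogeneous elements. -/
def IsGradedSubR {d n : ℕ} {M : Type} [AddCommGroup M] [Module ℂ M]
    [Module (MvPolynomial (Fin n) ℂ) M]
    (decomp : Lat d → Submodule ℂ M) (N : Submodule (MvPolynomial (Fin n) ℂ) M) : Prop :=
  N = Submodule.span (MvPolynomial (Fin n) ℂ) ((N : Set M) ∩ ⋃ γ : Lat d, (decomp γ : Set M))

/-- `h` is the primitive integral support function of the facet `G`. -/
def IsPISF (a : Fin n → Lat d) (G : Set (Fin n)) (h : Lat d →ₗ[ℤ] ℤ) : Prop :=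
  (∃ x, h x = 1) ∧ (∀ i, 0 ≤ h (a i)) ∧ (∀ i, h (a i) = 0 ↔ i ∈ G)

/-- The ℂ-linear extension of an integral linear form to ℂ^d. -/
def hC {d : ℕ} (h : Lat d →ₗ[ℤ] ℤ) (β : CS d) : ℂ :=
  ∑ j : Fin d, β j * ((h (Pi.single j 1) : ℤ) : ℂ)


/-!
For a finitely generated graded submodule `N`, pick finitely many homogeneous generators `g`,
all killed by `(I_F^A)^k`. A nonzero homogeneous element of `N` has a nonzero component
`∂^u g`, whose degree is `deg g + ∑ uᵢ aᵢ`; since `∂ᵢ^k ∈ (I_F^A)^k` for `aᵢ ∉ F`, we get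
`uᵢ < k` for those `i`. So `tdeg N` meets only finitely many cosets of `ℤF`, and its Zariski
closure lies in the finite union of the (closed) translates `α + ℂF`, `α ∈ tdeg N`.

Conversely, `∂^F` acting bijectively makes every `∂ᵢ`, `aᵢ ∈ F`, a nonzerodivisor on `M`, so
`0 ≠ m ∈ M_α` gives `α + ℕF ⊆ tdeg (R_A m)`. A polynomial vanishing on `α + ℕF` vanishes on
`α + ℂF`, because a polynomial vanishing on `ℕ^k ⊆ ℂ^k` is zero.
-/

open MvPolynomial
open scoped Pointwise

theorem zClosure_mono {S T : Set (CS d)} (h : S ⊆ T) : zClosure S ⊆ zClosure T :=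
  fun _ hx p hp => hx p fun y hy => hp y (h hy)

theorem zClosure_subset {S C : Set (CS d)} (hSC : S ⊆ C) (hC : IsZClosed C) : zClosure S ⊆ C :=
  (zClosure_mono hSC).trans hC

theorem IsZClosed.biUnion {ι : Type*} {s : Set ι} (hs : s.Finite) {C : ι → Set (CS d)}
    (hC : ∀ i ∈ s, IsZClosed (C i)) : IsZClosed (⋃ i ∈ s, C i) := by
  intro x hx
  by_contra hxC
  simp only [Set.mem_iUnion, not_exists] at hxC
  have hsep : ∀ i ∈ s, ∃ p : MvPolynomial (Fin d) ℂ,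
      (∀ y ∈ C i, eval y p = 0) ∧ eval x p ≠ 0 := by
    intro i hi
    by_contra! h
    exact hxC i hi (hC i hi h)
  choose! p hpC hpx using hsep
  have hprod := hx (∏ i ∈ hs.toFinset, p i) fun y hy => by
    obtain ⟨i, hi, hyi⟩ := Set.mem_iUnion₂.mp hy
    rw [map_prod]
    exact Finset.prod_eq_zero (hs.mem_toFinset.mpr hi) (hpC i hi y hyi)
  rw [map_prod] at hprod
  obtain ⟨i, hi, h0⟩ := Finset.prod_eq_zero_iff.mp hprod
  exact hpx i (hs.mem_toFinset.mp hi) h0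

theorem exists_eval_eq_linearMap (f : CS d →ₗ[ℂ] ℂ) :
    ∃ p : MvPolynomial (Fin d) ℂ, ∀ y, eval y p = f y :=
  ⟨∑ j, C (f (Pi.single j 1)) * X j, fun y => by
    rw [LinearMap.pi_apply_eq_sum_univ f y]
    simp only [map_sum, map_mul, eval_C, eval_X, smul_eq_mul]
    refine Finset.sum_congr rfl fun j _ => ?_
    rw [mul_comm]
    congr 2
    ext i
    simp [Pi.single_apply, eq_comm]⟩

theorem isZClosed_setOf_sub_mem (v : CS d) (W : Submodule ℂ (CS d)) :
    IsZClosed {x | v - x ∈ W} := by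
  intro x hx
  by_contra hxW
  obtain ⟨f, hfx, hWf⟩ := Submodule.exists_le_ker_of_notMem hxW
  obtain ⟨p, hp⟩ := exists_eval_eq_linearMap f
  refine hfx ?_
  have := hx (C (f v) - p) fun y hy => by
    rw [map_sub, eval_C, hp, ← map_sub]
    exact hWf hy
  rwa [map_sub, eval_C, hp, ← map_sub] at this

theorem add_sum_smul_mem_zClosure {ι : Type*} [Fintype ι] {T : Set (CS d)} (x : CS d)
    (v : ι → CS d) (hT : ∀ c : ι → ℕ, x + ∑ i, (c i : ℂ) • v i ∈ T) (c : ι → ℂ) :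
    x + ∑ i, c i • v i ∈ zClosure T := by
  intro p hp
  set q : MvPolynomial ι ℂ := bind₁ (fun j => C (x j) + ∑ i, C (v i j) * X i) p
  have hq : ∀ z : ι → ℂ, eval z q = eval (x + ∑ i, z i • v i) p := by
    intro z
    simp only [q, eval, eval₂Hom_bind₁]
    congr 2
    funext j
    simp [mul_comm]
  have hq0 : q = 0 := funext_set (fun _ => Set.range ((↑) : ℕ → ℂ))
    (fun _ => Set.infinite_range_of_injective Nat.cast_injective) fun z hz => by
      choose c hc using fun i => hz i (Set.mem_univ i)
      rw [map_zero, hq, ← funext hc]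
      exact hp _ (hT c)
  rw [← hq, hq0, map_zero]

def toCHom : Lat d →+ CS d := (Int.castAddHom ℂ).compLeft (Fin d)

theorem toCHom_apply (α : Lat d) : toCHom α = toC α := rfl

theorem toC_mem_CFace_of_mem_ZFace {a : Fin n → Lat d} {F : Set (Fin n)} {γ : Lat d}
    (hγ : γ ∈ ZFace a F) : toC γ ∈ CFace a F := by
  suffices ZFace a F ≤ (CFace a F).toAddSubgroup.comap toCHom from this hγ
  exact AddSubgroup.closure_le _ |>.mpr fun _ hf => Submodule.subset_span ⟨_, hf, rfl⟩

theorem add_mem_zClosure_of_add_NFace_subset {a : Fin n → Lat d} {F : Set (Fin n)}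
    {T : Set (Lat d)} {α : Lat d} (hT : ∀ f ∈ NFace a F, α + f ∈ T) {z : CS d}
    (hz : z ∈ CFace a F) : toC α + z ∈ zClosure (toC '' T) := by
  obtain ⟨k, c, g, rfl⟩ := Submodule.mem_span_set'.mp hz
  choose w hwF hw using fun j => (g j).2
  simp only [← hw]
  refine add_sum_smul_mem_zClosure (T := toC '' T) (toC α) (fun j => toC (w j))
    (fun c => ⟨α + ∑ j, c j • w j, hT _ ?_, ?_⟩) c
  · exact sum_mem fun j _ => nsmul_mem (AddSubmonoid.subset_closure (hwF j)) _
  · simp only [← toCHom_apply, map_add, map_sum, map_nsmul, Nat.cast_smul_eq_nsmul]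

theorem exists_sub_mem_CFace_of_mem_zClosure {a : Fin n → Lat d} {F : Set (Fin n)}
    {T : Set (Lat d)} (hT : (QuotientAddGroup.mk '' T : Set (Lat d ⧸ ZFace a F)).Finite)
    {β : CS d} (hβ : β ∈ zClosure (toC '' T)) : ∃ α ∈ T, toC α - β ∈ CFace a F := by
  obtain ⟨S, hST, hS⟩ :=
    Set.exists_subset_bijOn T (QuotientAddGroup.mk : Lat d → Lat d ⧸ ZFace a F)
  have hcover : toC '' T ⊆ ⋃ α ∈ S, {x | toC α - x ∈ CFace a F} := by
    rintro _ ⟨γ, hγ, rfl⟩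
    obtain ⟨α, hα, hαγ⟩ := hS.image_eq.symm ▸ Set.mem_image_of_mem _ hγ
    refine Set.mem_biUnion hα (?_ : toC α - toC γ ∈ CFace a F)
    rw [← toCHom_apply, ← toCHom_apply, ← map_sub]
    exact toC_mem_CFace_of_mem_ZFace <| by
      simpa [QuotientAddGroup.eq, neg_add_eq_sub] using hαγ.symm
  have hSfin : S.Finite := (hT.subset hS.image_eq.le).of_finite_image hS.injOn
  obtain ⟨α, hα, hβα⟩ := Set.mem_iUnion₂.mp <| zClosure_subset hcover
    (IsZClosed.biUnion hSfin fun α _ => isZClosed_setOf_sub_mem (toC α) (CFace a F)) hβ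
  exact ⟨α, hST hα, hβα⟩

section Graded

variable {σ ι K M : Type*} [CommSemiring K] [AddCommMonoid ι] [AddCommGroup M] [Module K M]
  [Module (MvPolynomial σ K) M]
  {decomp : ι → Submodule K M} {a : σ → ι}

theorem X_pow_smul_mem
    (hX : ∀ (i : σ) (γ : ι), ∀ m ∈ decomp γ, (X i : MvPolynomial σ K) • m ∈ decomp (γ + a i))
    (i : σ) (k : ℕ) {γ : ι} {m : M} (hm : m ∈ decomp γ) :
    (X i ^ k : MvPolynomial σ K) • m ∈ decomp (γ + k • a i) := by
  induction k with
  | zero => simpa using hm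
  | succ k ih => simpa [pow_succ', mul_smul, succ_nsmul, add_assoc] using hX i _ _ ih

theorem monomial_smul_mem
    (hX : ∀ (i : σ) (γ : ι), ∀ m ∈ decomp γ, (X i : MvPolynomial σ K) • m ∈ decomp (γ + a i))
    (u : σ →₀ ℕ) {γ : ι} {m : M} (hm : m ∈ decomp γ) :
    monomial u (1 : K) • m ∈ decomp (γ + Finsupp.linearCombination ℕ a u) := by
  induction u using Finsupp.induction_linear generalizing γ m with
  | zero => simpa using hm
  | add u v hu hv =>
    rw [← mul_one (1 : K), ← monomial_mul, mul_comm, mul_smul, map_add, ← add_assoc]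
    exact hv (hu hm)
  | single i k => simpa [← X_pow_eq_monomial] using X_pow_smul_mem hX i k hm

theorem monomial_mem_pow_of_X_mem {I : Ideal (MvPolynomial σ K)} {i : σ} (hi : X i ∈ I)
    {u : σ →₀ ℕ} {k : ℕ} (hk : k ≤ u i) : monomial u (1 : K) ∈ I ^ k := by
  have hu : Finsupp.single i k + (u - Finsupp.single i k) = u :=
    add_tsub_cancel_of_le (Finsupp.single_le_iff.mpr hk)
  rw [← hu, ← mul_one (1 : K), ← monomial_mul, ← X_pow_eq_monomial]
  exact Ideal.mul_mem_right _ _ (Ideal.pow_mem_pow hi k)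

end Graded

section Internal

variable {ι K M : Type*} [Semiring K] [AddCommGroup M] [Module K M] {decomp : ι → Submodule K M}

theorem eq_of_mem_of_mem (h : iSupIndep decomp) {γ δ : ι} {x : M} (hγ : x ∈ decomp γ)
    (hδ : x ∈ decomp δ) (hx : x ≠ 0) : γ = δ := by
  by_contra hne
  exact hx (Submodule.disjoint_def.mp (h.pairwiseDisjoint hne) x hγ hδ)

variable [DecidableEq ι]

def gradedProj (h : DirectSum.IsInternal decomp) (γ : ι) : M →ₗ[K] M :=
  (decomp γ).subtype ∘ₗ DirectSum.component K ι (fun δ => decomp δ) γ ∘ₗ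
    (LinearEquiv.ofBijective (DirectSum.coeLinearMap decomp) h).symm.toLinearMap

theorem gradedProj_of_mem (h : DirectSum.IsInternal decomp) {γ : ι} {x : M}
    (hx : x ∈ decomp γ) : gradedProj h γ x = x :=
  congrArg Subtype.val (h.ofBijective_coeLinearMap_of_mem hx)

theorem gradedProj_of_mem_ne (h : DirectSum.IsInternal decomp) {γ δ : ι} {x : M}
    (hx : x ∈ decomp δ) (hne : δ ≠ γ) : gradedProj h γ x = 0 :=
  congrArg Subtype.val (h.ofBijective_coeLinearMap_of_mem_ne hne hx)

theorem gradedProj_mem_span_inter (h : DirectSum.IsInternal decomp) {H : Set M}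
    (hH : H ⊆ ⋃ δ, (decomp δ : Set M)) (γ : ι) {x : M} (hx : x ∈ Submodule.span K H) :
    gradedProj h γ x ∈ Submodule.span K (H ∩ decomp γ) := by
  induction hx using Submodule.span_induction with
  | mem y hy =>
    obtain ⟨δ, hδ⟩ := Set.mem_iUnion.mp (hH hy)
    by_cases hδγ : δ = γ
    · subst hδγ
      rw [gradedProj_of_mem h hδ]
      exact Submodule.subset_span ⟨hy, hδ⟩
    · rw [gradedProj_of_mem_ne h hδ hδγ]
      exact Submodule.zero_mem _
  | zero => simp
  | add y z _ _ hy hz => simpa using add_mem hy hz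
  | smul c y _ hy => simpa using Submodule.smul_mem _ c hy

theorem exists_mem_ne_zero_of_mem_span (h : DirectSum.IsInternal decomp) {H : Set M}
    (hH : H ⊆ ⋃ δ, (decomp δ : Set M)) {γ : ι} {x : M} (hx : x ∈ Submodule.span K H)
    (hxγ : x ∈ decomp γ) (hx0 : x ≠ 0) : ∃ y ∈ H, y ∈ decomp γ ∧ y ≠ 0 := by
  have hproj := gradedProj_mem_span_inter h hH γ hx
  rw [gradedProj_of_mem h hxγ] at hproj
  by_contra! hzero
  have hbot : Submodule.span K (H ∩ decomp γ) = ⊥ :=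
    Submodule.span_eq_bot.mpr fun y hy => hzero y hy.1 hy.2
  exact hx0 ((Submodule.mem_bot K).mp (hbot ▸ hproj))

end Internal

theorem isSMulRegular_X_of_mem {σ K M : Type*} [CommSemiring K] [AddCommGroup M]
    [Module (MvPolynomial σ K) M] [Fintype σ] {F : Set σ}
    (hF : IsSMulRegular M (∏ i : σ, if i ∈ F then (X i : MvPolynomial σ K) else 1))
    {i : σ} (hi : i ∈ F) : IsSMulRegular M (X i : MvPolynomial σ K) := by
  rw [← Finset.prod_erase_mul _ _ (Finset.mem_univ i), if_pos hi] at hF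
  exact hF.of_mul


section Module

variable {σ ι K M : Type*} [CommSemiring K] [AddCommMonoid ι] [AddCommGroup M] [Module K M]
  [Module (MvPolynomial σ K) M] {decomp : ι → Submodule K M} {a : σ → ι}

theorem exists_monomial_smul_mem_ne_zero [DecidableEq ι] [IsScalarTower K (MvPolynomial σ K) M]
    (h : DirectSum.IsInternal decomp)
    (hX : ∀ (i : σ) (γ : ι), ∀ m ∈ decomp γ, (X i : MvPolynomial σ K) • m ∈ decomp (γ + a i))
    {G : Set M} (hG : G ⊆ ⋃ δ, (decomp δ : Set M)) {γ : ι} {x : M}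
    (hx : x ∈ Submodule.span (MvPolynomial σ K) G) (hxγ : x ∈ decomp γ) (hx0 : x ≠ 0) :
    ∃ g ∈ G, ∃ u : σ →₀ ℕ, monomial u (1 : K) • g ∈ decomp γ ∧ monomial u (1 : K) • g ≠ 0 := by
  have hmon : Submodule.span K (Set.range fun u : σ →₀ ℕ => monomial u (1 : K)) = ⊤ := by
    simpa using (basisMonomials σ K).span_eq
  rw [← Submodule.restrictScalars_mem K, ← Submodule.span_smul_of_span_eq_top hmon] at hx
  have hhom : (Set.range fun u : σ →₀ ℕ => monomial u (1 : K)) • G ⊆ ⋃ δ, (decomp δ : Set M) := by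
    rintro _ ⟨_, ⟨u, rfl⟩, g, hg, rfl⟩
    obtain ⟨δ, hδ⟩ := Set.mem_iUnion.mp (hG hg)
    exact Set.mem_iUnion.mpr ⟨_, monomial_smul_mem hX u hδ⟩
  obtain ⟨_, ⟨_, ⟨u, rfl⟩, g, hg, rfl⟩, hγ, h0⟩ := exists_mem_ne_zero_of_mem_span h hhom hx hxγ hx0
  exact ⟨g, hg, u, hγ, h0⟩

theorem exists_isSMulRegular_smul_mem [IsScalarTower K (MvPolynomial σ K) M]
    (hX : ∀ (i : σ) (γ : ι), ∀ m ∈ decomp γ, (X i : MvPolynomial σ K) • m ∈ decomp (γ + a i))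
    {F : Set σ} (hF : ∀ i ∈ F, IsSMulRegular M (X i : MvPolynomial σ K))
    {f : ι} (hf : f ∈ AddSubmonoid.closure (a '' F)) {γ : ι} {m : M} (hm : m ∈ decomp γ) :
    ∃ r : MvPolynomial σ K, IsSMulRegular M r ∧ r • m ∈ decomp (γ + f) := by
  induction hf using AddSubmonoid.closure_induction generalizing γ m with
  | mem _ hf =>
    obtain ⟨i, hi, rfl⟩ := hf
    exact ⟨X i, hF i hi, hX i γ m hm⟩
  | zero => exact ⟨1, IsSMulRegular.one M, by simpa using hm⟩
  | add f f' _ _ ih ih' =>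
    obtain ⟨r, hr, hrm⟩ := ih hm
    obtain ⟨r', hr', hrm'⟩ := ih' hrm
    exact ⟨r' * r, hr'.mul hr, by simpa [mul_smul, add_assoc] using hrm'⟩

end Module

section GradedRA

variable {M : Type} [AddCommGroup M] [Module ℂ M] [Module (MvPolynomial (Fin n) ℂ) M]

def tdeg (decomp : Lat d → Submodule ℂ M) (N : Submodule (MvPolynomial (Fin n) ℂ) M) :
    Set (Lat d) :=
  {γ | ∃ m ∈ N, m ∈ decomp γ ∧ m ≠ 0}

theorem exists_finset_homogeneous_le_span {decomp : Lat d → Submodule ℂ M}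
    {N : Submodule (MvPolynomial (Fin n) ℂ) M} (hgr : IsGradedSubR decomp N) (hfg : N.FG) :
    ∃ G : Finset M, (↑G ⊆ ⋃ γ, (decomp γ : Set M)) ∧
      N ≤ Submodule.span (MvPolynomial (Fin n) ℂ) ↑G := by
  obtain ⟨G, hGN, hspan⟩ := (Submodule.fg_span_iff_fg_span_finset_subset _).mp
    (by rwa [← hgr] : (Submodule.span _ ((N : Set M) ∩ ⋃ γ, (decomp γ : Set M))).FG)
  exact ⟨G, hGN.trans Set.inter_subset_right, (hgr.trans hspan).le⟩

theorem isGradedSubR_span_singleton {decomp : Lat d → Submodule ℂ M} {α : Lat d} {m : M}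
    (hm : m ∈ decomp α) :
    IsGradedSubR decomp (Submodule.span (MvPolynomial (Fin n) ℂ) {m}) :=
  le_antisymm
    (Submodule.span_le.mpr <| Set.singleton_subset_iff.mpr <| Submodule.subset_span
      ⟨Submodule.mem_span_singleton_self m, Set.mem_iUnion.mpr ⟨α, hm⟩⟩)
    (Submodule.span_le.mpr Set.inter_subset_left)

end GradedRA

theorem linearCombination_mem_ZFace {a : Fin n → Lat d} {F : Set (Fin n)} {u : Fin n →₀ ℕ}
    (hu : ∀ i ∈ u.support, i ∈ F) : Finsupp.linearCombination ℕ a u ∈ ZFace a F := by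
  rw [Finsupp.linearCombination_apply]
  exact sum_mem fun i hi =>
    nsmul_mem (AddSubgroup.subset_closure (Set.mem_image_of_mem a (hu i hi))) _

theorem mk_add_linearCombination_filter_notMem (a : Fin n → Lat d) (F : Set (Fin n))
    (α : Lat d) (u : Fin n →₀ ℕ) :
    (QuotientAddGroup.mk (α + Finsupp.linearCombination ℕ a (u.filter (· ∉ F))) :
      Lat d ⧸ ZFace a F) = QuotientAddGroup.mk (α + Finsupp.linearCombination ℕ a u) := by
  have hsplit := congrArg (Finsupp.linearCombination ℕ a) (Finsupp.filter_add_filter_not u (· ∈ F))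
  rw [map_add] at hsplit
  rw [QuotientAddGroup.eq, ← hsplit,
    show ∀ y z : Lat d, -(α + z) + (α + (y + z)) = y by intros; abel]
  refine linearCombination_mem_ZFace fun i hi => ?_
  rw [Finsupp.support_filter, Finset.mem_filter] at hi
  exact hi.2

theorem lt_of_monomial_smul_ne_zero {M : Type*} [AddCommGroup M]
    [Module (MvPolynomial (Fin n) ℂ) M] {a : Fin n → Lat d} {F : Set (Fin n)} {k : ℕ} {g : M}
    (hk : ∀ r ∈ IFA a F ^ k, r • g = 0) {u : Fin n →₀ ℕ} (hu : monomial u (1 : ℂ) • g ≠ 0)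
    {i : Fin n} (hi : i ∉ F) : u i < k := by
  by_contra! hle
  have hX : (X i : MvPolynomial (Fin n) ℂ) ∈ IFA a F :=
    Ideal.mem_sup_right (Ideal.subset_span ⟨i, hi, rfl⟩)
  exact hu (hk _ (monomial_mem_pow_of_X_mem hX hle))

section Torsion

variable {a : Fin n → Lat d} {F : Set (Fin n)} {M : Type} [AddCommGroup M] [Module ℂ M]
  [Module (MvPolynomial (Fin n) ℂ) M] [IsScalarTower ℂ (MvPolynomial (Fin n) ℂ) M]
  {decomp : Lat d → Submodule ℂ M}

theorem finite_tdeg_mod_ZFace (hInternal : DirectSum.IsInternal decomp)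
    (hCompat : ∀ (i : Fin n) (γ : Lat d), ∀ m ∈ decomp γ,
      (X i : MvPolynomial (Fin n) ℂ) • m ∈ decomp (γ + a i))
    (hTor : ∀ m : M, ∃ k : ℕ, ∀ r ∈ IFA a F ^ k, r • m = 0)
    {N : Submodule (MvPolynomial (Fin n) ℂ) M} (hgr : IsGradedSubR decomp N) (hfg : N.FG) :
    (QuotientAddGroup.mk '' tdeg decomp N : Set (Lat d ⧸ ZFace a F)).Finite := by
  obtain ⟨G, hGhom, hNG⟩ := exists_finset_homogeneous_le_span hgr hfg
  choose! deg hdeg using fun g (hg : g ∈ G) => Set.mem_iUnion.mp (hGhom hg)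
  choose k hk using hTor
  let bound : Fin n →₀ ℕ := Finsupp.equivFunOnFinite.symm fun _ => G.sup k
  refine ((G.finite_toSet.prod (Set.finite_Iic bound)).image fun p =>
    (QuotientAddGroup.mk (deg p.1 + Finsupp.linearCombination ℕ a p.2) :
      Lat d ⧸ ZFace a F)).subset ?_
  rintro _ ⟨γ, ⟨x, hxN, hxγ, hx0⟩, rfl⟩
  obtain ⟨g, hg, u, hu, hu0⟩ :=
    exists_monomial_smul_mem_ne_zero hInternal hCompat hGhom (hNG hxN) hxγ hx0
  have hγ : γ = deg g + Finsupp.linearCombination ℕ a u :=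
    eq_of_mem_of_mem hInternal.submodule_iSupIndep hu (monomial_smul_mem hCompat u (hdeg g hg)) hu0
  refine ⟨(g, u.filter (· ∉ F)), ⟨hg, fun i => ?_⟩, ?_⟩
  · by_cases hi : i ∈ F
    · simp [hi]
    · simpa [hi, bound] using
        (lt_of_monomial_smul_ne_zero (hk g) hu0 hi).le.trans (Finset.le_sup (f := k) hg)
  · simp only [hγ]
    exact mk_add_linearCombination_filter_notMem a F _ u

theorem add_mem_tdeg_span_singleton
    (hCompat : ∀ (i : Fin n) (γ : Lat d), ∀ m ∈ decomp γ,
      (X i : MvPolynomial (Fin n) ℂ) • m ∈ decomp (γ + a i))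
    (hreg : ∀ i ∈ F, IsSMulRegular M (X i : MvPolynomial (Fin n) ℂ))
    {α : Lat d} {m : M} (hm : m ∈ decomp α) (hm0 : m ≠ 0) {f : Lat d} (hf : f ∈ NFace a F) :
    α + f ∈ tdeg decomp (Submodule.span (MvPolynomial (Fin n) ℂ) {m}) := by
  obtain ⟨r, hr, hrm⟩ := exists_isSMulRegular_smul_mem hCompat hreg hf hm
  exact ⟨r • m, Submodule.smul_mem _ r (Submodule.mem_span_singleton_self m), hrm,
    fun h => hm0 (hr.right_eq_zero_of_smul h)⟩

end Torsion

theorem qdeg_of_invertible_torsion_module_general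
    {d n : ℕ} (a : Fin n → Lat d)
    (F : Set (Fin n))
    (M : Type) [AddCommGroup M] [Module ℂ M] [Module (MvPolynomial (Fin n) ℂ) M]
    [IsScalarTower ℂ (MvPolynomial (Fin n) ℂ) M]
    (decomp : Lat d → Submodule ℂ M)
    (hInternal : DirectSum.IsInternal decomp)
    (hCompat : ∀ (i : Fin n) (γ : Lat d), ∀ m ∈ decomp γ,
      (MvPolynomial.X i : MvPolynomial (Fin n) ℂ) • m ∈ decomp (γ + a i))
    (hInv : Function.Bijective fun m : M =>
      (∏ i : Fin n, if i ∈ F then (MvPolynomial.X i : MvPolynomial (Fin n) ℂ) else 1) • m)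
    (hTor : ∀ m : M, ∃ k : ℕ, ∀ r ∈ IFA a F ^ k, r • m = 0) :
    ∀ β : CS d,
      (β ∈ ⋃ (N : Submodule (MvPolynomial (Fin n) ℂ) M)
            (_ : IsGradedSubR decomp N ∧ N.FG),
          zClosure (toC '' {γ : Lat d | ∃ m ∈ N, m ∈ decomp γ ∧ m ≠ 0})) ↔
      ∃ α : Lat d, decomp α ≠ ⊥ ∧ toC α - β ∈ CFace a F := by
  intro β
  simp only [Set.mem_iUnion, exists_prop]
  constructor
  · rintro ⟨N, ⟨hgr, hfg⟩, hβ⟩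
    obtain ⟨α, ⟨m, -, hm, hm0⟩, hαβ⟩ :=
      exists_sub_mem_CFace_of_mem_zClosure (finite_tdeg_mod_ZFace hInternal hCompat hTor hgr hfg) hβ
    exact ⟨α, (Submodule.ne_bot_iff _).mpr ⟨m, hm, hm0⟩, hαβ⟩
  · rintro ⟨α, hα, hαβ⟩
    obtain ⟨m, hm, hm0⟩ := (Submodule.ne_bot_iff _).mp hα
    have hreg i (hi : i ∈ F) := isSMulRegular_X_of_mem hInv.injective hi
    refine ⟨_, ⟨isGradedSubR_span_singleton hm, Submodule.fg_span_singleton m⟩, ?_⟩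
    have hβ := add_mem_zClosure_of_add_NFace_subset
      (fun f hf => add_mem_tdeg_span_singleton hCompat hreg hm hm0 hf) (sub_mem_comm_iff.mp hαβ)
    rwa [add_sub_cancel] at hβ

/-- Let `F ⪯ A` be a face and `M` a ℤ^d-graded R_A-module on which
multiplication by ∂^F is invertible and which is I_F^A-torsion.  Then
qdeg M = ⋃_{α ∈ tdeg M} (α + ℂF): a point β ∈ ℂ^d lies in qdeg M iff M_α ≠ 0 for some
α ∈ (β + ℂF) ∩ ℤ^d. -/
theorem qdeg_of_invertible_torsion_module
    {d n : ℕ} (hd : 0 < d) (hn : 0 < n) (a : Fin n → Lat d)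
    (hZA : SpansZ a) (hPt : Pointed a)
    (F : Set (Fin n)) (hF : IsFace a F)
    (M : Type) [AddCommGroup M] [Module ℂ M] [Module (MvPolynomial (Fin n) ℂ) M]
    [IsScalarTower ℂ (MvPolynomial (Fin n) ℂ) M]
    (decomp : Lat d → Submodule ℂ M)
    (hInternal : DirectSum.IsInternal decomp)
    (hCompat : ∀ (i : Fin n) (γ : Lat d), ∀ m ∈ decomp γ,
      (MvPolynomial.X i : MvPolynomial (Fin n) ℂ) • m ∈ decomp (γ + a i))
    (hInv : Function.Bijective fun m : M =>
      (∏ i : Fin n, if i ∈ F then (MvPolynomial.X i : MvPolynomial (Fin n) ℂ) else 1) • m)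
    (hTor : ∀ m : M, ∃ k : ℕ, ∀ r ∈ IFA a F ^ k, r • m = 0) :
    ∀ β : CS d,
      (β ∈ ⋃ (N : Submodule (MvPolynomial (Fin n) ℂ) M)
            (_ : IsGradedSubR decomp N ∧ N.FG),
          zClosure (toC '' {γ : Lat d | ∃ m ∈ N, m ∈ decomp γ ∧ m ≠ 0})) ↔
      ∃ α : Lat d, decomp α ≠ ⊥ ∧ toC α - β ∈ CFace a F :=
  qdeg_of_invertible_torsion_module_general a F M decomp hInternal hCompat hInv hTor

end

end GKZ
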